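/- arXiv:math/0402316 — 2 statements merged into one kernel-verified Lean document; each statement's English description precedes it below -/
import Mathlib

section
/- Let (X, μ) be a finite measure space, let φ be a measurable real function, and suppose there exist α ∈ (0,1) and C₃ > 0 such that ∫ exp(−α(φ − sup φ)) dμ ≤ C₃, and moreover ∫ exp(f − φ) dμ = 1 for a bounded measurable function f, where μ(X) = 1. Then for any β > 0, setting p = 1 + (1−α)/β and p' its Hölder conjugate, one has log ∫ exp(−(1+β)φ) dμ ≥ (αβ/(1−α))·sup φ − (p'·sup f + C₃/(p−1)). -/
/-!
Let `Λ(t) = log ∫ exp (t φ) dμ` be the cumulant generating function of `φ`; Hölder's inequality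
makes it convex. Since `-1 = (1/p') (-(1 + β)) + (1/p) (-α)`, convexity bounds `Λ(-(1 + β))` below
by `p' Λ(-1) - Λ(-α) / (p - 1)`. The normalisation `∫ exp (f - φ) dμ = 1` gives
`Λ(-1) ≥ -sup f`, and the `α`-invariant bound gives `Λ(-α) ≤ log C₃ - α sup φ ≤ C₃ - α sup φ`.
-/

open MeasureTheory ProbabilityTheory

namespace MeasureTheory

variable {α : Type*} [MeasurableSpace α] {μ : Measure α}

theorem integral_rpow_mul_rpow_le {f g : α → ℝ} (hf0 : 0 ≤ᵐ[μ] f) (hg0 : 0 ≤ᵐ[μ] g)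
    (hf : Integrable f μ) (hg : Integrable g μ) {a b : ℝ} (ha : 0 ≤ a) (hb : 0 ≤ b)
    (hab : a + b = 1) :
    ∫ x, f x ^ a * g x ^ b ∂μ ≤ (∫ x, f x ∂μ) ^ a * (∫ x, g x ∂μ) ^ b := by
  have hfg0 : 0 ≤ᵐ[μ] fun x => f x ^ a * g x ^ b := by
    filter_upwards [hf0, hg0] with x hfx hgx using
      mul_nonneg (Real.rpow_nonneg hfx a) (Real.rpow_nonneg hgx b)
  have hholder := ENNReal.lintegral_mul_norm_pow_le hf.1.aemeasurable.ennreal_ofReal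
    hg.1.aemeasurable.ennreal_ofReal ha hb hab
  rw [integral_eq_lintegral_of_nonneg_ae hfg0
      ((hf.1.aemeasurable.pow_const a).mul (hg.1.aemeasurable.pow_const b)).aestronglyMeasurable,
    integral_eq_lintegral_of_nonneg_ae hf0 hf.1, integral_eq_lintegral_of_nonneg_ae hg0 hg.1,
    ENNReal.toReal_rpow, ENNReal.toReal_rpow, ← ENNReal.toReal_mul]
  refine ENNReal.toReal_mono ?_ ((lintegral_congr_ae ?_).trans_le hholder)
  · exact ENNReal.mul_ne_top (ENNReal.rpow_ne_top_of_nonneg ha hf.lintegral_lt_top.ne)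
      (ENNReal.rpow_ne_top_of_nonneg hb hg.lintegral_lt_top.ne)
  · filter_upwards [hf0, hg0] with x hfx hgx
    rw [ENNReal.ofReal_mul (Real.rpow_nonneg hfx a), ENNReal.ofReal_rpow_of_nonneg hfx ha,
      ENNReal.ofReal_rpow_of_nonneg hgx hb]

end MeasureTheory

namespace ProbabilityTheory

open Real

variable {Ω : Type*} [MeasurableSpace Ω] {μ : Measure Ω} {X : Ω → ℝ}

theorem mem_integrableExpSet_of_abs_le [IsFiniteMeasure μ] (hX : AEMeasurable X μ) {B : ℝ}
    (hB : ∀ᵐ x ∂μ, |X x| ≤ B) (t : ℝ) : t ∈ integrableExpSet X μ :=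
  integrable_exp_mul_of_mem_Icc hX (by filter_upwards [hB] with x hx using abs_le.1 hx)

theorem mgf_mul_add_mul_le {s t a b : ℝ} (hs : s ∈ integrableExpSet X μ)
    (ht : t ∈ integrableExpSet X μ) (ha : 0 ≤ a) (hb : 0 ≤ b) (hab : a + b = 1) :
    mgf X μ (a * s + b * t) ≤ mgf X μ s ^ a * mgf X μ t ^ b := by
  have h := integral_rpow_mul_rpow_le (ae_of_all μ fun x => (exp_pos (s * X x)).le)
    (ae_of_all μ fun x => (exp_pos (t * X x)).le) hs ht ha hb hab
  refine (integral_congr_ae (ae_of_all μ fun x => ?_)).trans_le h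
  rw [← exp_mul, ← exp_mul, ← exp_add]
  congr 1
  ring

theorem convexOn_cgf : ConvexOn ℝ (integrableExpSet X μ) (cgf X μ) := by
  refine ⟨convex_integrableExpSet, fun s hs t ht a b ha hb hab => ?_⟩
  rcases eq_zero_or_neZero μ with rfl | hμ
  · simp [cgf_zero_measure]
  have hpos : ∀ u ∈ integrableExpSet X μ, 0 < mgf X μ u := fun u hu => mgf_pos' hμ.out hu
  calc cgf X μ (a • s + b • t) ≤ log (mgf X μ s ^ a * mgf X μ t ^ b) :=
        log_le_log (hpos _ (convex_integrableExpSet hs ht ha hb hab))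
          (mgf_mul_add_mul_le hs ht ha hb hab)
    _ = a • cgf X μ s + b • cgf X μ t := by
        rw [log_mul (rpow_pos_of_pos (hpos s hs) a).ne' (rpow_pos_of_pos (hpos t ht) b).ne',
          log_rpow (hpos s hs), log_rpow (hpos t ht)]
        rfl

theorem le_cgf_of_holderConjugate {p q s t : ℝ} (hpq : p.HolderConjugate q)
    (hs : s ∈ integrableExpSet X μ) (ht : t ∈ integrableExpSet X μ) :
    q * cgf X μ (q⁻¹ * s + p⁻¹ * t) - cgf X μ t / (p - 1) ≤ cgf X μ s := by
  have h := convexOn_cgf.2 hs ht (inv_nonneg.2 hpq.symm.nonneg) (inv_nonneg.2 hpq.nonneg)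
    (by rw [add_comm]; exact hpq.inv_add_inv_eq_one)
  simp only [smul_eq_mul] at h
  have hq := hpq.symm.pos
  have hp := hpq.pos.ne'
  have hp1 := hpq.sub_one_ne_zero
  calc q * cgf X μ (q⁻¹ * s + p⁻¹ * t) - cgf X μ t / (p - 1)
      ≤ q * (q⁻¹ * cgf X μ s + p⁻¹ * cgf X μ t) - cgf X μ t / (p - 1) := by gcongr
    _ = cgf X μ s := by
      rw [hpq.conjugate_eq]
      field_simp
      ring

theorem neg_le_cgf_neg_one {f : Ω → ℝ} {F : ℝ} (hfF : ∀ᵐ x ∂μ, f x ≤ F)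
    (hX : -1 ∈ integrableExpSet X μ) (h : ∫ x, exp (f x - X x) ∂μ = 1) :
    -F ≤ cgf X μ (-1) := by
  have hint : Integrable (fun x => exp (f x - X x)) μ :=
    Integrable.of_integral_ne_zero (h ▸ one_ne_zero)
  have hone : 1 ≤ exp F * mgf X μ (-1) :=
    calc 1 = ∫ x, exp (f x - X x) ∂μ := h.symm
      _ ≤ ∫ x, exp F * exp (-1 * X x) ∂μ := by
        refine integral_mono_ae hint (hX.const_mul _) ?_
        filter_upwards [hfF] with x hx
        rw [← exp_add]
        exact exp_le_exp.2 (by linarith)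
      _ = exp F * mgf X μ (-1) := integral_const_mul _ _
  have hmgf : exp (-F) ≤ mgf X μ (-1) :=
    calc exp (-F) = exp (-F) * 1 := (mul_one _).symm
      _ ≤ exp (-F) * (exp F * mgf X μ (-1)) := by gcongr
      _ = mgf X μ (-1) := by rw [← mul_assoc, ← exp_add, neg_add_cancel, exp_zero, one_mul]
  exact (log_exp (-F)).symm.trans_le (log_le_log (exp_pos _) hmgf)

theorem cgf_le_of_integral_exp_mul_sub_le [NeZero μ] {t c C : ℝ}
    (ht : t ∈ integrableExpSet X μ) (h : ∫ x, exp (t * (X x - c)) ∂μ ≤ C) :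
    cgf X μ t ≤ log C + t * c := by
  have hshift : ∫ x, exp (t * (X x - c)) ∂μ = mgf X μ t * exp (-(t * c)) := by
    simp_rw [sub_eq_add_neg]
    rw [← mul_neg, ← mgf_add_const]
    rfl
  have hmgf := mgf_pos' (NeZero.ne μ) ht
  have h_log := log_le_log (mul_pos hmgf (exp_pos _)) (hshift ▸ h)
  rw [log_mul hmgf.ne' (exp_pos _).ne', log_exp] at h_log
  rw [cgf]
  linarith

end ProbabilityTheory

theorem inv_mul_add_inv_mul_eq_neg_one {α β p p' : ℝ} (hpq : p.HolderConjugate p')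
    (hp : p = 1 + (1 - α) / β) (hβ : β ≠ 0) : p'⁻¹ * -(1 + β) + p⁻¹ * -α = -1 := by
  have hβp : β * p = 1 + β - α := by
    rw [hp]
    field_simp
    ring
  rw [← hpq.one_sub_inv]
  linear_combination (-p⁻¹) * hβp + β * inv_mul_cancel₀ hpq.pos.ne'

theorem stmt_4_general {X : Type*} [MeasurableSpace X]
    (μ : Measure X) [IsProbabilityMeasure μ]
    (φ f : X → ℝ) (hφm : Measurable φ)
    (hφb : ∃ B, ∀ x, |φ x| ≤ B) (hfb : ∃ B, ∀ x, |f x| ≤ B)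
    (α β C₃ : ℝ) (hα : α ∈ Set.Ioo (0:ℝ) 1) (hβ : 0 < β) (hC₃ : 0 < C₃)
    (halpha : ∫ x, Real.exp (-α * (φ x - ⨆ y, φ y)) ∂μ ≤ C₃)
    (hnorm : ∫ x, Real.exp (f x - φ x) ∂μ = 1)
    (p p' : ℝ) (hp : p = 1 + (1 - α) / β) (hp' : p' = p / (p - 1)) :
    Real.log (∫ x, Real.exp (-(1 + β) * φ x) ∂μ)
      ≥ (α * β / (1 - α)) * (⨆ y, φ y) - (p' * (⨆ y, f y) + C₃ / (p - 1)) := by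
  obtain ⟨Bφ, hBφ⟩ := hφb
  obtain ⟨Bf, hBf⟩ := hfb
  have hint := mem_integrableExpSet_of_abs_le hφm.aemeasurable (ae_of_all μ hBφ)
  have hf_le : ∀ x, f x ≤ ⨆ y, f y :=
    le_ciSup ⟨Bf, Set.forall_mem_range.2 fun y => (abs_le.1 (hBf y)).2⟩
  have h_one := neg_le_cgf_neg_one (ae_of_all μ hf_le) (hint (-1)) hnorm
  have h_alpha : cgf φ μ (-α) ≤ C₃ - α * ⨆ y, φ y := by
    linarith [cgf_le_of_integral_exp_mul_sub_le (hint (-α)) halpha, Real.log_le_self hC₃.le]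
  have hpq : p.HolderConjugate p' := by
    refine (Real.holderConjugate_iff_eq_conjExponent ?_).2 hp'
    rw [hp, lt_add_iff_pos_right]
    exact div_pos (sub_pos.2 hα.2) hβ
  have h_holder := le_cgf_of_holderConjugate hpq (hint (-(1 + β))) (hint (-α))
  rw [inv_mul_add_inv_mul_eq_neg_one hpq hp hβ.ne'] at h_holder
  have hαβ : α * β / (1 - α) = α / (p - 1) := by
    rw [hp, add_sub_cancel_left, div_div_eq_mul_div]
  have hp'0 := hpq.symm.pos.le
  have hp10 := hpq.sub_one_pos
  change _ ≤ cgf φ μ (-(1 + β))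
  calc α * β / (1 - α) * (⨆ y, φ y) - (p' * (⨆ y, f y) + C₃ / (p - 1))
      = p' * -(⨆ y, f y) - (C₃ - α * ⨆ y, φ y) / (p - 1) := by rw [hαβ]; ring
    _ ≤ p' * cgf φ μ (-1) - cgf φ μ (-α) / (p - 1) := by gcongr
    _ ≤ cgf φ μ (-(1 + β)) := h_holder

theorem stmt_4 {X : Type*} [MeasurableSpace X] [Nonempty X]
    (μ : Measure X) [IsProbabilityMeasure μ]
    (φ f : X → ℝ) (hφm : Measurable φ) (hfm : Measurable f)
    (hφb : ∃ B, ∀ x, |φ x| ≤ B) (hfb : ∃ B, ∀ x, |f x| ≤ B)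
    (α β C₃ : ℝ) (hα : α ∈ Set.Ioo (0:ℝ) 1) (hβ : 0 < β) (hC₃ : 0 < C₃)
    (halpha : ∫ x, Real.exp (-α * (φ x - ⨆ y, φ y)) ∂μ ≤ C₃)
    (hnorm : ∫ x, Real.exp (f x - φ x) ∂μ = 1)
    (p p' : ℝ) (hp : p = 1 + (1 - α) / β) (hp' : p' = p / (p - 1)) :
    Real.log (∫ x, Real.exp (-(1 + β) * φ x) ∂μ)
      ≥ (α * β / (1 - α)) * (⨆ y, φ y) - (p' * (⨆ y, f y) + C₃ / (p - 1)) :=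
  stmt_4_general μ φ f hφm hφb hfb α β C₃ hα hβ hC₃ halpha hnorm p p' hp hp'
end

section
/- Let m₁, ..., m_k be positive integers and λ a positive real with λ < 1/m₁ + ... + 1/m_k. Then the integral over the unit polydisk Δ^k ⊂ ℂ^k of (|z₁|^{m₁} + ... + |z_k|^{m_k})^{−2λ} with respect to Lebesgue measure is finite. -/
/-!
Weighted AM-GM with weights `1 / (mᵢ S)`, where `S = ∑ 1 / mⱼ`, gives
`(∑ |zᵢ|^mᵢ)^(-2λ) ≤ ∏ |zᵢ|^(-2λ/S)` off the coordinate hyperplanes. As `2λ/S < 2 = dim_ℝ ℂ`,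
each factor `|zᵢ|^(-2λ/S)` is integrable on the unit disk, hence so is their product on the
polydisk.
-/

open MeasureTheory Set Metric

theorem Real.prod_rpow_le_sum_of_sum_eq_one {ι : Type*} (s : Finset ι) {b t : ι → ℝ}
    (hb : ∀ i ∈ s, 0 ≤ b i) (ht : ∀ i ∈ s, 0 ≤ t i) (ht_sum : ∑ i ∈ s, t i = 1) :
    ∏ i ∈ s, b i ^ t i ≤ ∑ i ∈ s, b i := by
  have hsum : 0 ≤ ∑ i ∈ s, b i := Finset.sum_nonneg hb
  calc ∏ i ∈ s, b i ^ t i ≤ ∏ i ∈ s, (∑ j ∈ s, b j) ^ t i :=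
        Finset.prod_le_prod (fun i hi => Real.rpow_nonneg (hb i hi) _) fun i hi =>
          Real.rpow_le_rpow (hb i hi) (Finset.single_le_sum hb hi) (ht i hi)
    _ = ∑ i ∈ s, b i := by rw [← Real.rpow_sum_of_nonneg hsum ht, ht_sum, Real.rpow_one]

theorem Real.sum_rpow_rpow_neg_le_prod {ι : Type*} [Fintype ι] [Nonempty ι] {a p : ι → ℝ}
    (ha : ∀ i, 0 < a i) (hp : ∀ i, 0 < p i) {s : ℝ} (hs : 0 ≤ s) :
    (∑ i, a i ^ p i) ^ (-s) ≤ ∏ i, a i ^ (-(s / ∑ j, 1 / p j)) := by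
  set S := ∑ j, 1 / p j
  have hS : 0 < S := Finset.sum_pos (fun i _ => one_div_pos.mpr (hp i)) Finset.univ_nonempty
  have hweights : ∑ i, 1 / (p i * S) = 1 := by
    simp_rw [← div_div]
    rw [← Finset.sum_div, div_self hS.ne']
  have hgeom : ∀ i, (a i ^ p i) ^ (1 / (p i * S)) = a i ^ (1 / S) := by
    intro i
    rw [← Real.rpow_mul (ha i).le]
    congr 1
    field_simp [(hp i).ne']
  have hAMGM := Real.prod_rpow_le_sum_of_sum_eq_one Finset.univ
    (fun i _ => (Real.rpow_pos_of_pos (ha i) (p i)).le)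
    (fun i _ => (one_div_pos.mpr (mul_pos (hp i) hS)).le) hweights
  simp only [hgeom] at hAMGM
  calc (∑ i, a i ^ p i) ^ (-s) ≤ (∏ i, a i ^ (1 / S)) ^ (-s) :=
        Real.rpow_le_rpow_of_nonpos (Finset.prod_pos fun i _ => Real.rpow_pos_of_pos (ha i) _)
          hAMGM (neg_nonpos.mpr hs)
    _ = ∏ i, a i ^ (-(s / S)) := by
        rw [← Real.finsetProd_rpow _ _ (fun i _ => (Real.rpow_pos_of_pos (ha i) _).le)]
        refine Finset.prod_congr rfl fun i _ => ?_
        rw [← Real.rpow_mul (ha i).le]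
        ring_nf

theorem integrableOn_ball_norm_rpow_neg {E : Type*} [NormedAddCommGroup E] [NormedSpace ℝ E]
    [FiniteDimensional ℝ E] [MeasurableSpace E] [BorelSpace E] {μ : Measure E}
    [μ.IsAddHaarMeasure] (hd : 1 ≤ Module.finrank ℝ E) {α : ℝ}
    (hα : α < Module.finrank ℝ E) (r : ℝ) :
    IntegrableOn (fun x : E => ‖x‖ ^ (-α)) (ball 0 r) μ :=
  integrableOn_ball_of_norm_le_rpow (C := 1) hd hα
    (Filter.Eventually.of_forall fun x => by
      rw [one_mul, Real.norm_of_nonneg (Real.rpow_nonneg (norm_nonneg x) _)])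
    (Measurable.aestronglyMeasurable (by fun_prop))

theorem integrableOn_pi_ball_prod_norm_rpow_neg {ι E : Type*} [Fintype ι]
    [NormedAddCommGroup E] [NormedSpace ℝ E]
    [FiniteDimensional ℝ E] [MeasurableSpace E] [BorelSpace E] {μ : Measure E}
    [μ.IsAddHaarMeasure] (hd : 1 ≤ Module.finrank ℝ E) {α : ℝ}
    (hα : α < Module.finrank ℝ E) (r : ℝ) :
    IntegrableOn (fun z : ι → E => ∏ i, ‖z i‖ ^ (-α)) (univ.pi fun _ => ball 0 r)
      (Measure.pi fun _ => μ) := by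
  rw [IntegrableOn, Measure.restrict_pi_pi]
  exact Integrable.fintype_prod fun _ => integrableOn_ball_norm_rpow_neg hd hα r

theorem stmt_7 (k : ℕ) (hk : 1 ≤ k) (m : Fin k → ℕ) (hm : ∀ i, 1 ≤ m i)
    (lam : ℝ) (hl : 0 < lam) (hl2 : lam < ∑ i, (1 : ℝ) / (m i : ℝ)) :
    IntegrableOn
      (fun z : Fin k → ℂ => (∑ i, ‖z i‖ ^ (m i)) ^ (-(2 * lam)))
      {z : Fin k → ℂ | ∀ i, ‖z i‖ < 1} volume := by
  have : Nonempty (Fin k) := ⟨⟨0, hk⟩⟩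
  set α := 2 * lam / ∑ i, (1 : ℝ) / (m i : ℝ)
  have hα : α < Module.finrank ℝ ℂ := by
    rw [Complex.finrank_real_complex, div_lt_iff₀ (hl.trans hl2)]
    push_cast
    linarith
  have hpolydisk : {z : Fin k → ℂ | ∀ i, ‖z i‖ < 1} = univ.pi fun _ => ball 0 1 := by
    ext z
    simp
  have hdom := integrableOn_pi_ball_prod_norm_rpow_neg (ι := Fin k) (μ := volume)
    (by simp) hα 1
  rw [hpolydisk]
  refine hdom.mono' (Measurable.aestronglyMeasurable (by fun_prop)) ?_
  have hne : ∀ᵐ z : Fin k → ℂ, ∀ i, z i ≠ 0 :=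
    ae_all_iff.mpr fun i => Measure.ae_eval_ne _ i 0
  filter_upwards [ae_restrict_of_ae hne] with z hz
  rw [Real.norm_of_nonneg (by positivity)]
  simp_rw [← Real.rpow_natCast]
  exact Real.sum_rpow_rpow_neg_le_prod (fun i => norm_pos_iff.mpr (hz i))
    (fun i => by exact_mod_cast hm i) (by positivity)
end
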